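/- For nonnegative integers n, m, r with r ≤ n and real θ > 0, the r-th falling factorial moment of the random variable R_{n,m} with distribution P(R_{n,m}=x) = x!·C(n,x)·C(m,x)·(θ+x)^{(m-x)}/(θ+n)^{(m)} equals (r!/(θ+n)^{(m)}) · Σ_{s=0}^{r} C(n-s, r-s)·(-1)^s·C(n,s)·(θ+n-s)^{(m)}. That is, Σ_x x^{[r]}·P(R_{n,m}=x) equals this expression, where x^{[r]} = x(x-1)···(x-r+1) is the falling factorial. -/

import Mathlib

open Finset

/-- Rising factorial `a^{(k)} = a(a+1)⋯(a+k-1)`. -/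
noncomputable def rise (a : ℝ) (k : ℕ) : ℝ := ∏ i ∈ Finset.range k, (a + i)

/-- Falling factorial `a^{[k]} = a(a-1)⋯(a-k+1)`. -/
noncomputable def fall (a : ℝ) (k : ℕ) : ℝ := ∏ i ∈ Finset.range k, (a - i)

/-!
Write `F t = t^{(m)}`. Its forward differences are `Δ^x F t = m^{[x]} (t + x)^{(m - x)}`, so the
weight `x! C(n,x) C(m,x) (θ+x)^{(m-x)}` equals `C(n,x) Δ^x F θ`: the distribution of `R_{n,m}` is
the Gregory–Newton expansion of `F (θ + n)`, normalised. Since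
`C(n,x) x^{[r]} = n^{[r]} C(n-r,x-r)`, the `r`-th factorial moment is again a Newton expansion,
of `n^{[r]} Δ^r F` at `θ + n - r`, and writing `Δ^r` as an alternating sum of shifts gives the
right-hand side.
-/

open Function fwdDiff

section NewtonSeries

variable {M G : Type*} [AddCommMonoid M] [AddCommGroup G] (h : M)

theorem fwdDiff_iter_eq_alternating_sum_shift (f : M → G) (n : ℕ) (y : M) :
    (Δ_[h])^[n] f y = ∑ k ∈ range (n + 1), ((-1 : ℤ) ^ k * n.choose k) • f (y + (n - k) • h) := by
  rw [fwdDiff_iter_eq_sum_shift, ← sum_range_reflect]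
  refine sum_congr rfl fun k hk => ?_
  have hk : k ≤ n := Nat.lt_succ_iff.mp (mem_range.mp hk)
  rw [Nat.add_sub_cancel, Nat.sub_sub_self hk, Nat.choose_symm hk]

theorem Nat.choose_mul_descFactorial {n k r : ℕ} (hrk : r ≤ k) :
    n.choose k * k.descFactorial r = n.descFactorial r * (n - r).choose (k - r) := by
  rw [Nat.descFactorial_eq_factorial_mul_choose, Nat.descFactorial_eq_factorial_mul_choose,
    mul_left_comm, Nat.choose_mul hrk, mul_assoc]

theorem sum_choose_mul_descFactorial_smul_fwdDiff_iter (f : M → G) {n r : ℕ} (hr : r ≤ n)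
    (y : M) :
    ∑ x ∈ range (n + 1), (n.choose x * x.descFactorial r) • (Δ_[h])^[x] f y
      = n.descFactorial r • (Δ_[h])^[r] f (y + (n - r) • h) := by
  rw [shift_eq_sum_fwdDiff_iter h ((Δ_[h])^[r] f) (n - r) y, smul_sum,
    show n + 1 = r + (n - r + 1) by omega, sum_range_add, sum_eq_zero fun x hx => by
      rw [Nat.descFactorial_eq_zero_iff_lt.mpr (mem_range.mp hx), mul_zero, zero_smul],
    zero_add]
  refine sum_congr rfl fun x _ => ?_
  rw [Nat.choose_mul_descFactorial (Nat.le_add_right r x), Nat.add_sub_cancel_left, mul_smul,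
    add_comm r x, iterate_add_apply]

end NewtonSeries

lemma rise_succ (a : ℝ) (k : ℕ) : rise a (k + 1) = rise a k * (a + k) :=
  prod_range_succ _ _

lemma rise_succ' (a : ℝ) (k : ℕ) : rise a (k + 1) = a * rise (a + 1) k := by
  rw [rise, prod_range_succ', Nat.cast_zero, add_zero, mul_comm, rise]
  congr 1
  refine prod_congr rfl fun i _ => ?_
  push_cast
  ring

lemma fwdDiff_rise (k : ℕ) (a : ℝ) :
    Δ_[1] (fun b => rise b k) a = k * rise (a + 1) (k - 1) := by
  cases k with
  | zero => simp [fwdDiff, rise]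
  | succ k =>
    rw [fwdDiff, rise_succ, rise_succ', Nat.add_sub_cancel]
    push_cast
    ring

lemma fwdDiff_iter_rise (m j : ℕ) (a : ℝ) :
    (Δ_[1])^[j] (fun b => rise b m) a = m.descFactorial j * rise (a + j) (m - j) := by
  induction j generalizing a with
  | zero => simp
  | succ j ih =>
    have step := fwdDiff_rise (m - j) (a + j)
    rw [fwdDiff] at step
    rw [iterate_succ_apply', funext ih, fwdDiff, ← mul_sub, add_right_comm, step,
      Nat.descFactorial_succ, Nat.sub_sub, Nat.cast_mul, Nat.cast_succ, add_assoc]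
    ring

lemma fall_natCast (x r : ℕ) : fall x r = x.descFactorial r := by
  rw [fall, ← descPochhammer_eval_eq_prod_range, descPochhammer_eval_eq_descFactorial]

lemma sum_fall_mul_choose_rise_eq_fwdDiff_iter (n m r : ℕ) (hr : r ≤ n) (θ : ℝ) :
    ∑ x ∈ range (min n m + 1),
      fall x r * ((x.factorial : ℝ) * n.choose x * m.choose x * rise (θ + x) (m - x))
      = n.descFactorial r * (Δ_[1])^[r] (fun b => rise b m) (θ + n - r) := by
  have hterm (x : ℕ) :
      fall x r * ((x.factorial : ℝ) * n.choose x * m.choose x * rise (θ + x) (m - x))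
        = (n.choose x * x.descFactorial r) • (Δ_[1])^[x] (fun b => rise b m) θ := by
    rw [fall_natCast, fwdDiff_iter_rise, nsmul_eq_mul, Nat.descFactorial_eq_factorial_mul_choose m]
    push_cast
    ring
  calc _ = ∑ x ∈ range (n + 1),
        fall x r * ((x.factorial : ℝ) * n.choose x * m.choose x * rise (θ + x) (m - x)) := by
        refine sum_subset (range_subset_range.mpr (by omega)) fun x hx hx' => ?_
        rw [Nat.choose_eq_zero_of_lt (n := m) (k := x) (by simp at hx hx'; omega)]
        simp
    _ = ∑ x ∈ range (n + 1), (n.choose x * x.descFactorial r) •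
          (Δ_[1])^[x] (fun b => rise b m) θ := sum_congr rfl fun x _ => hterm x
    _ = _ := by
        rw [sum_choose_mul_descFactorial_smul_fwdDiff_iter 1 _ hr, nsmul_eq_mul, nsmul_one,
          Nat.cast_sub hr, add_sub_assoc]

lemma factorial_mul_alternating_sum_rise_eq_fwdDiff_iter (n m r : ℕ) (a : ℝ) :
    (r.factorial : ℝ) * ∑ s ∈ range (r + 1),
        ((n - s).choose (r - s) : ℝ) * (-1 : ℝ) ^ s * n.choose s * rise (a - s) m
      = n.descFactorial r * (Δ_[1])^[r] (fun b => rise b m) (a - r) := by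
  rw [fwdDiff_iter_eq_alternating_sum_shift, mul_sum, mul_sum]
  refine sum_congr rfl fun s hs => ?_
  have hs : s ≤ r := Nat.lt_succ_iff.mp (mem_range.mp hs)
  have harg : a - r + (r - s) • (1 : ℝ) = a - s := by
    rw [nsmul_one, Nat.cast_sub hs]
    ring
  have hchoose : (n.descFactorial r : ℝ) * r.choose s
      = r.factorial * n.choose s * (n - s).choose (r - s) := by
    rw [Nat.descFactorial_eq_factorial_mul_choose]
    exact_mod_cast by rw [mul_assoc, Nat.choose_mul hs, mul_assoc]
  rw [harg, zsmul_eq_mul]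
  push_cast
  linear_combination (-1 : ℝ) ^ s * rise (a - s) m * hchoose.symm

theorem stmt_1_general (n m r : ℕ) (hr : r ≤ n) (θ : ℝ) :
    ∑ x ∈ Finset.range (min n m + 1),
      fall (x : ℝ) r *
        ((x.factorial : ℝ) * (n.choose x) * (m.choose x) * rise (θ + x) (m - x)
          / rise (θ + n) m)
      = (r.factorial : ℝ) / rise (θ + n) m *
          ∑ s ∈ Finset.range (r + 1),
            ((n - s).choose (r - s) : ℝ) * (-1 : ℝ) ^ s * (n.choose s) *
              rise (θ + n - s) m := by
  simp only [← mul_div_assoc, ← sum_div, div_mul_eq_mul_div]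
  rw [sum_fall_mul_choose_rise_eq_fwdDiff_iter n m r hr,
    factorial_mul_alternating_sum_rise_eq_fwdDiff_iter]

theorem stmt_1 (n m r : ℕ) (hr : r ≤ n) (θ : ℝ) (hθ : 0 < θ) :
    ∑ x ∈ Finset.range (min n m + 1),
      fall (x : ℝ) r *
        ((x.factorial : ℝ) * (n.choose x) * (m.choose x) * rise (θ + x) (m - x)
          / rise (θ + n) m)
      = (r.factorial : ℝ) / rise (θ + n) m *
          ∑ s ∈ Finset.range (r + 1),
            ((n - s).choose (r - s) : ℝ) * (-1 : ℝ) ^ s * (n.choose s) *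
              rise (θ + n - s) m :=
  stmt_1_general n m r hr θ
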